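/- Let L and R be nonempty subsets of a group G with G = W(L∪L⁻¹)·W(R∪R⁻¹), and suppose L ∩ N_G(L) ≠ ∅ or R ∩ N_G(R) ≠ ∅, where N_G(S) = {g ∈ G : g⁻¹Sg = S}. If the minimum weak connection length k of G relative to (L,R) is finite, then all k weakly connected components of 2S(G;L,R) are isomorphic as digraphs. -/

import Mathlib

open Relation Pointwise

/-- `w` is a product of a list of `n` elements of `S`. -/
def IsWord {G : Type*} [Group G] (S : Set G) (n : ℕ) (w : G) : Prop :=
  ∃ l : List G, l.length = n ∧ (∀ x ∈ l, x ∈ S) ∧ l.prod = w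

/-- The set of all positive-length words in `S`. -/
def WordSet {G : Type*} [Group G] (S : Set G) : Set G :=
  {w | ∃ n : ℕ, 0 < n ∧ IsWord S n w}

/-- Arc of the two-sided group digraph `2S(G;L,R)`. -/
def Arc {G : Type*} [Group G] (L R : Set G) (g h : G) : Prop :=
  ∃ l ∈ L, ∃ r ∈ R, h = l⁻¹ * g * r

/-- Existence of a directed path (possibly of length 0). -/
def DPath {G : Type*} [Group G] (L R : Set G) : G → G → Prop :=
  ReflTransGen (Arc L R)

/-- Weak connectivity: path ignoring directions. -/
def WeakConn {G : Type*} [Group G] (L R : Set G) : G → G → Prop :=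
  ReflTransGen (fun g h => Arc L R g h ∨ Arc L R h g)

/-- Strong connectivity of two vertices. -/
def StrongConn {G : Type*} [Group G] (L R : Set G) (g h : G) : Prop :=
  DPath L R g h ∧ DPath L R h g

/-- The normalizer of a subset: elements `g` with `g⁻¹ S g = S`. -/
def SetNormalizer {G : Type*} [Group G] (S : Set G) : Set G :=
  {g : G | (fun x => g⁻¹ * x * g) '' S = S}

/-! If `t ∈ L` normalizes `L`, left multiplication by any element of the normalizer `N_G(L)` is a
digraph automorphism, and these automorphisms act transitively on `N_G(L)`. Since `t` is an arc
label, `x * s` is adjacent to `t^{±1} * x` for `s ∈ R^{±1}`, and going through a fixed `r₀ ∈ R`,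
`s * x` is weakly connected to `t^{±1} * x` for `s ∈ L^{±1}`. As `G = W(L ∪ L⁻¹) W(R ∪ R⁻¹)`,
every vertex is therefore weakly connected to a point of `N_G(L)`, and any component can be
translated onto any other. The case `t ∈ R ∩ N_G(R)` is the mirror image, with right
multiplication. -/

section TwoSidedGroupDigraph

variable {G : Type*} [Group G] {L R : Set G}

theorem mem_setNormalizer_iff {S : Set G} {g : G} :
    g ∈ SetNormalizer S ↔ g ∈ Subgroup.normalizer S := by
  have mem_conj_image : ∀ x, x ∈ (fun y => g⁻¹ * y * g) '' S ↔ g * x * g⁻¹ ∈ S := fun x =>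
    ⟨by rintro ⟨y, hy, rfl⟩; simpa [mul_assoc] using hy, fun h => ⟨_, h, by group⟩⟩
  simp only [SetNormalizer, Set.mem_ofPred_eq, Set.ext_iff, mem_conj_image]
  exact forall_congr' fun _ => Iff.comm

theorem arc_mul_left_iff {a x y : G} (ha : a ∈ Subgroup.normalizer L) :
    Arc L R (a * x) (a * y) ↔ Arc L R x y := by
  constructor
  · rintro ⟨l, hl, r, hr, h⟩
    refine ⟨a⁻¹ * l * a, (Subgroup.mem_set_normalizer_iff''.1 ha l).1 hl, r, hr, ?_⟩
    rw [← mul_left_cancel_iff (a := a), h]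
    group
  · rintro ⟨l, hl, r, hr, rfl⟩
    exact ⟨a * l * a⁻¹, (Subgroup.mem_set_normalizer_iff.1 ha l).1 hl, r, hr, by group⟩

theorem arc_mul_right_iff {a x y : G} (ha : a ∈ Subgroup.normalizer R) :
    Arc L R (x * a) (y * a) ↔ Arc L R x y := by
  constructor
  · rintro ⟨l, hl, r, hr, h⟩
    refine ⟨l, hl, a * r * a⁻¹, (Subgroup.mem_set_normalizer_iff.1 ha r).1 hr, ?_⟩
    rw [← mul_right_cancel_iff (a := a), h]
    group
  · rintro ⟨l, hl, r, hr, rfl⟩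
    exact ⟨l, hl, a⁻¹ * r * a, (Subgroup.mem_set_normalizer_iff''.1 ha r).1 hr, by group⟩

namespace WeakConn

variable {x y z : G}

theorem of_arc (h : Arc L R x y) : WeakConn L R x y :=
  ReflTransGen.single (Or.inl h)

theorem of_arc_rev (h : Arc L R y x) : WeakConn L R x y :=
  ReflTransGen.single (Or.inr h)

theorem trans (hxy : WeakConn L R x y) (hyz : WeakConn L R y z) : WeakConn L R x z :=
  ReflTransGen.trans hxy hyz

theorem symm (h : WeakConn L R x y) : WeakConn L R y x :=
  (@ReflTransGen.stdSymm _ _ ⟨fun _ _ => Or.symm⟩).symm _ _ h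

theorem map {f : G → G} (hf : ∀ a b, Arc L R a b → Arc L R (f a) (f b))
    (h : WeakConn L R x y) : WeakConn L R (f x) (f y) :=
  ReflTransGen.lift f (fun a b => Or.imp (hf a b) (hf b a)) _ _ h

theorem mul_left {a : G} (ha : a ∈ Subgroup.normalizer L) (h : WeakConn L R x y) :
    WeakConn L R (a * x) (a * y) :=
  h.map fun _ _ => (arc_mul_left_iff ha).2

theorem mul_right {a : G} (ha : a ∈ Subgroup.normalizer R) (h : WeakConn L R x y) :
    WeakConn L R (x * a) (y * a) :=
  h.map fun _ _ => (arc_mul_right_iff ha).2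

end WeakConn

theorem exists_arcIso_weakComponents_of_equiv (φ : G ≃ G)
    (hφ : ∀ x y, Arc L R (φ x) (φ y) ↔ Arc L R x y) {g g' : G} (hg : WeakConn L R g' (φ g)) :
    ∃ e : {h | WeakConn L R g h} ≃ {h | WeakConn L R g' h},
      ∀ x y : {h | WeakConn L R g h}, Arc L R (x : G) (y : G) ↔ Arc L R (e x : G) (e y : G) := by
  have hφ_symm : ∀ x y, Arc L R x y → Arc L R (φ.symm x) (φ.symm y) := fun x y h => by
    rwa [← hφ, φ.apply_symm_apply, φ.apply_symm_apply]
  have hmem : ∀ h, WeakConn L R g h ↔ WeakConn L R g' (φ h) := fun h =>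
    ⟨fun hh => hg.trans (hh.map fun a b => (hφ a b).2), fun hh => by
      simpa using (hg.symm.trans hh).map hφ_symm⟩
  exact ⟨φ.subtypeEquiv hmem, fun x y => (hφ x y).symm⟩

theorem exists_arcIso_weakComponents_of_transitive (V : Set G)
    (hcov : ∀ g, ∃ v ∈ V, WeakConn L R g v)
    (htrans : ∀ v ∈ V, ∀ v' ∈ V, ∃ φ : G ≃ G,
      (∀ x y, Arc L R (φ x) (φ y) ↔ Arc L R x y) ∧ φ v = v')
    (g g' : G) :
    ∃ e : {h | WeakConn L R g h} ≃ {h | WeakConn L R g' h},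
      ∀ x y : {h | WeakConn L R g h}, Arc L R (x : G) (y : G) ↔ Arc L R (e x : G) (e y : G) := by
  obtain ⟨v, hv, hgv⟩ := hcov g
  obtain ⟨v', hv', hgv'⟩ := hcov g'
  obtain ⟨φ, hφ, rfl⟩ := htrans v hv v' hv'
  exact exists_arcIso_weakComponents_of_equiv φ hφ
    (hgv'.trans (hgv.map fun a b => (hφ a b).2).symm)

theorem wordSet_subset_closure (S : Set G) : WordSet S ⊆ Submonoid.closure S := by
  rintro _ ⟨n, -, l, -, hl, rfl⟩
  exact Submonoid.list_prod_mem _ fun x hx => Submonoid.subset_closure (hl x hx)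

theorem forall_mem_wordSet_mul_wordSet {A B : Set G} {P : G → Prop} (h1 : P 1)
    (hA : ∀ a ∈ A, ∀ x, P x → P (a * x)) (hB : ∀ b ∈ B, ∀ x, P x → P (x * b)) :
    ∀ g ∈ WordSet A * WordSet B, P g := by
  rintro _ ⟨u, hu, v, hv, rfl⟩
  replace hu := wordSet_subset_closure A hu
  replace hv := wordSet_subset_closure B hv
  dsimp only
  induction hv using Submonoid.closure_induction_right with
  | one =>
    rw [mul_one]
    induction hu using Submonoid.closure_induction_left with
    | one => exact h1
    | mul_left a ha x _ ih => exact hA a ha x ih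
  | mul_right x _ b hb ih => exact mul_assoc u x b ▸ hB b hb _ ih

theorem exists_zpowers_weakConn_mul_right_of_mem_left {t s : G} (htL : t ∈ L)
    (hs : s ∈ R ∪ R⁻¹) (x : G) :
    ∃ a ∈ Subgroup.zpowers t, WeakConn L R (x * s) (a * x) := by
  rcases hs with hs | hs
  · exact ⟨t, Subgroup.mem_zpowers t, .of_arc_rev ⟨t, htL, s, hs, by group⟩⟩
  · exact ⟨t⁻¹, inv_mem (Subgroup.mem_zpowers t), .of_arc ⟨t, htL, s⁻¹, hs, by group⟩⟩

theorem exists_zpowers_weakConn_mul_left_of_mem_left {t r₀ s : G} (htL : t ∈ L) (hr₀ : r₀ ∈ R)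
    (hs : s ∈ L ∪ L⁻¹) (x : G) :
    ∃ a ∈ Subgroup.zpowers t, WeakConn L R (s * x) (a * x) := by
  rcases hs with hs | hs
  · obtain ⟨a, ha, hxa⟩ := exists_zpowers_weakConn_mul_right_of_mem_left htL (Or.inl hr₀) x
    exact ⟨a, ha, (WeakConn.of_arc ⟨s, hs, r₀, hr₀, by group⟩).trans hxa⟩
  · obtain ⟨a, ha, hxa⟩ :=
      exists_zpowers_weakConn_mul_right_of_mem_left htL (Or.inr (Set.inv_mem_inv.2 hr₀)) x
    exact ⟨a, ha, (WeakConn.of_arc_rev ⟨s⁻¹, hs, r₀, hr₀, by group⟩).trans hxa⟩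

theorem exists_mem_normalizer_weakConn_of_mem_left {t r₀ : G} (htL : t ∈ L)
    (htN : t ∈ Subgroup.normalizer L) (hr₀ : r₀ ∈ R) :
    ∀ g ∈ WordSet (L ∪ L⁻¹) * WordSet (R ∪ R⁻¹),
      ∃ v ∈ Subgroup.normalizer L, WeakConn L R g v := by
  have hzN : Subgroup.zpowers t ≤ Subgroup.normalizer L := Subgroup.zpowers_le.2 htN
  refine forall_mem_wordSet_mul_wordSet ⟨1, one_mem _, .refl⟩ ?_ ?_
  · rintro s hs x ⟨v, hv, hxv⟩
    obtain ⟨a, ha, hsx⟩ := exists_zpowers_weakConn_mul_left_of_mem_left htL hr₀ hs x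
    exact ⟨a * v, mul_mem (hzN ha) hv, hsx.trans (hxv.mul_left (hzN ha))⟩
  · rintro s hs x ⟨v, hv, hxv⟩
    obtain ⟨a, ha, hxs⟩ := exists_zpowers_weakConn_mul_right_of_mem_left htL hs x
    exact ⟨a * v, mul_mem (hzN ha) hv, hxs.trans (hxv.mul_left (hzN ha))⟩

theorem exists_zpowers_weakConn_mul_left_of_mem_right {t s : G} (htR : t ∈ R)
    (hs : s ∈ L ∪ L⁻¹) (x : G) :
    ∃ a ∈ Subgroup.zpowers t, WeakConn L R (s * x) (x * a) := by
  rcases hs with hs | hs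
  · exact ⟨t, Subgroup.mem_zpowers t, .of_arc ⟨s, hs, t, htR, by group⟩⟩
  · exact ⟨t⁻¹, inv_mem (Subgroup.mem_zpowers t), .of_arc_rev ⟨s⁻¹, hs, t, htR, by group⟩⟩

theorem exists_zpowers_weakConn_mul_right_of_mem_right {t l₀ s : G} (htR : t ∈ R) (hl₀ : l₀ ∈ L)
    (hs : s ∈ R ∪ R⁻¹) (x : G) :
    ∃ a ∈ Subgroup.zpowers t, WeakConn L R (x * s) (x * a) := by
  rcases hs with hs | hs
  · obtain ⟨a, ha, hxa⟩ := exists_zpowers_weakConn_mul_left_of_mem_right htR (Or.inl hl₀) x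
    exact ⟨a, ha, (WeakConn.of_arc_rev ⟨l₀, hl₀, s, hs, by group⟩).trans hxa⟩
  · obtain ⟨a, ha, hxa⟩ :=
      exists_zpowers_weakConn_mul_left_of_mem_right htR (Or.inr (Set.inv_mem_inv.2 hl₀)) x
    exact ⟨a, ha, (WeakConn.of_arc ⟨l₀, hl₀, s⁻¹, hs, by group⟩).trans hxa⟩

theorem exists_mem_normalizer_weakConn_of_mem_right {t l₀ : G} (htR : t ∈ R)
    (htN : t ∈ Subgroup.normalizer R) (hl₀ : l₀ ∈ L) :
    ∀ g ∈ WordSet (L ∪ L⁻¹) * WordSet (R ∪ R⁻¹),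
      ∃ v ∈ Subgroup.normalizer R, WeakConn L R g v := by
  have hzN : Subgroup.zpowers t ≤ Subgroup.normalizer R := Subgroup.zpowers_le.2 htN
  refine forall_mem_wordSet_mul_wordSet ⟨1, one_mem _, .refl⟩ ?_ ?_
  · rintro s hs x ⟨v, hv, hxv⟩
    obtain ⟨a, ha, hsx⟩ := exists_zpowers_weakConn_mul_left_of_mem_right htR hs x
    exact ⟨v * a, mul_mem hv (hzN ha), hsx.trans (hxv.mul_right (hzN ha))⟩
  · rintro s hs x ⟨v, hv, hxv⟩
    obtain ⟨a, ha, hxs⟩ := exists_zpowers_weakConn_mul_right_of_mem_right htR hl₀ hs x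
    exact ⟨v * a, mul_mem hv (hzN ha), hxs.trans (hxv.mul_right (hzN ha))⟩

end TwoSidedGroupDigraph

theorem stmt_9_general {G : Type*} [Group G] (L R : Set G) (hL : L.Nonempty) (hR : R.Nonempty)
    (hG : WordSet (L ∪ L⁻¹) * WordSet (R ∪ R⁻¹) = Set.univ)
    (hN : (L ∩ SetNormalizer L).Nonempty ∨ (R ∩ SetNormalizer R).Nonempty) :
    ∀ C ∈ {C : Set G | ∃ g : G, C = {h | WeakConn L R g h}},
      ∀ D ∈ {C : Set G | ∃ g : G, C = {h | WeakConn L R g h}},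
        ∃ φ : C ≃ D, ∀ x y : C, Arc L R (x : G) (y : G) ↔ Arc L R (φ x : G) (φ y : G) := by
  rintro _ ⟨g, rfl⟩ _ ⟨g', rfl⟩
  have hmem : ∀ x : G, x ∈ WordSet (L ∪ L⁻¹) * WordSet (R ∪ R⁻¹) := fun x => hG ▸ trivial
  rcases hN with ⟨t, htL, htN⟩ | ⟨t, htR, htN⟩
  · obtain ⟨r₀, hr₀⟩ := hR
    refine exists_arcIso_weakComponents_of_transitive (Subgroup.normalizer L)
      (fun x => exists_mem_normalizer_weakConn_of_mem_left htL
        (mem_setNormalizer_iff.1 htN) hr₀ x (hmem x)) ?_ g g'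
    exact fun v hv v' hv' => ⟨Equiv.mulLeft (v' * v⁻¹),
      fun x y => arc_mul_left_iff (mul_mem hv' (inv_mem hv)), by simp⟩
  · obtain ⟨l₀, hl₀⟩ := hL
    refine exists_arcIso_weakComponents_of_transitive (Subgroup.normalizer R)
      (fun x => exists_mem_normalizer_weakConn_of_mem_right htR
        (mem_setNormalizer_iff.1 htN) hl₀ x (hmem x)) ?_ g g'
    exact fun v hv v' hv' => ⟨Equiv.mulRight (v⁻¹ * v'),
      fun x y => arc_mul_right_iff (mul_mem (inv_mem hv) hv'), by simp⟩

theorem stmt_9 {G : Type*} [Group G] (L R : Set G) (hL : L.Nonempty) (hR : R.Nonempty)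
    (hG : WordSet (L ∪ L⁻¹) * WordSet (R ∪ R⁻¹) = Set.univ)
    (hN : (L ∩ SetNormalizer L).Nonempty ∨ (R ∩ SetNormalizer R).Nonempty)
    (k : ℕ)
    (hk : IsLeast {n : ℕ | 0 < n ∧ ∃ w : G,
        (IsWord L n w ∨ IsWord L⁻¹ n w ∨ IsWord R n w ∨ IsWord R⁻¹ n w) ∧
        WeakConn L R w 1} k) :
    ∀ C ∈ {C : Set G | ∃ g : G, C = {h | WeakConn L R g h}},
      ∀ D ∈ {C : Set G | ∃ g : G, C = {h | WeakConn L R g h}},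
        ∃ φ : C ≃ D, ∀ x y : C, Arc L R (x : G) (y : G) ↔ Arc L R (φ x : G) (φ y : G) :=
  stmt_9_general L R hL hR hG hN
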